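/- arXiv:math/0507297 — 5 statements merged into one kernel-verified Lean document; each statement's English description precedes it below -/
import Mathlib

section
/- Define polynomials F_j^n(λ,q) = Σ_{α ∈ T_j^n} Π_{s=1}^j (λ - q_{α_s}), with F_0^n = 1. Then for 1 ≤ j ≤ n-1 the recursion F_{j+1}^{n+2}(λ,q) = (λ - q_{n+2}) F_j^{n+1}(λ,q) + F_{j+1}^n(λ,q) holds. -/
/-- The predicate describing membership in `T_j^n`: `α` is strictly increasing,
`1 ≤ α s ≤ n`, and with `α (j+1) := n+1` every consecutive difference is odd. -/
def isT (j n : ℕ) (α : Fin j → ℕ) : Prop :=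
  StrictMono α ∧ (∀ s, 1 ≤ α s ∧ α s ≤ n) ∧
    ∀ s : Fin j,
      Odd ((if h : (s : ℕ) + 1 < j then (α ⟨(s : ℕ) + 1, h⟩ : ℤ) else (n : ℤ) + 1)
        - (α s : ℤ))

open Classical in
/-- `Fpoly j n lam q = F_j^n(λ,q) = Σ_{α ∈ T_j^n} Π_{s=1}^j (λ - q (α s))`,
with `F_0^n = 1`. -/
noncomputable def Fpoly (j n : ℕ) (lam : ℂ) (q : ℕ → ℂ) : ℂ :=
  ∑ β : Fin j → Fin (n + 2),
    if isT j n (fun s => (β s : ℕ)) then ∏ s, (lam - q (β s)) else 0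

/-!
Sort the tuples of `T_{j+1}^N` by their last entry `x + 1`. The final gap condition says that
`N - x` is odd, and what remains is exactly a tuple of `T_j^x`, so
`F_{j+1}^N = Σ_{x < N, N - x odd} (λ - q_{x+1}) F_j^x`.
For `N = n + 2` the term `x = n + 1` is `(λ - q_{n+2}) F_j^{n+1}`, the term `x = n` vanishes,
and the terms `x < n` form the same expansion of `F_{j+1}^n`, since `n + 2 - x` and `n - x`
have the same parity.
-/

theorem Fin.strictMono_snoc_iff {α : Type*} [Preorder α] {n : ℕ} {f : Fin n → α} {x : α} :
    StrictMono (Fin.snoc f x : Fin (n + 1) → α) ↔ StrictMono f ∧ ∀ i, f i < x := by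
  simpa [Fin.insertNth_last', Fin.castSucc_lt_last, not_le.2 (Fin.castSucc_lt_last _)] using
    Fin.strictMono_insertNth_iff (Fin.last n) x f

/-- `Fin.snoc α (n + 1) s.succ` is `α_{s+1}`, with the convention `α_{j+1} = n + 1`. -/
theorem isT_iff {j n : ℕ} {α : Fin j → ℕ} :
    isT j n α ↔ StrictMono α ∧ (∀ s, 1 ≤ α s ∧ α s ≤ n) ∧
      ∀ s : Fin j, Odd (((Fin.snoc α (n + 1) : Fin (j + 1) → ℕ) s.succ : ℤ) - α s) := by
  unfold isT
  refine and_congr_right' (and_congr_right' (forall_congr' fun s => ?_))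
  split_ifs <;> simp [Fin.snoc, *, Fin.castLT]

theorem isT_snoc_succ_iff {j N x : ℕ} {g : Fin j → ℕ} :
    isT (j + 1) N (Fin.snoc g (x + 1)) ↔ isT j x g ∧ x < N ∧ Odd ((N : ℤ) - x) := by
  simp only [isT_iff, Fin.strictMono_snoc_iff, Fin.forall_fin_succ' (n := j), Fin.succ_castSucc,
    Fin.snoc_castSucc, Fin.succ_last, Fin.snoc_last]
  push_cast [add_sub_add_right_eq_sub]
  constructor
  · rintro ⟨⟨hmono, hlt⟩, ⟨hbd, -, hxN⟩, hgap, hlast⟩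
    exact ⟨⟨hmono, fun i => ⟨(hbd i).1, Nat.le_of_lt_succ (hlt i)⟩, hgap⟩, hxN, hlast⟩
  · rintro ⟨⟨hmono, hbd, hgap⟩, hxN, hlast⟩
    refine ⟨⟨hmono, fun i => Nat.lt_succ_of_le (hbd i).2⟩,
      ⟨fun i => ⟨(hbd i).1, ?_⟩, trivial, hxN⟩, hgap, hlast⟩
    exact (hbd i).2.trans hxN.le

theorem not_isT_snoc_zero {j N : ℕ} {g : Fin j → ℕ} : ¬ isT (j + 1) N (Fin.snoc g 0) := by
  rintro ⟨-, hbd, -⟩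
  simpa using (hbd (Fin.last j)).1

open Classical in
theorem Fpoly_eq_sum_fin {j n m : ℕ} (h : n + 2 ≤ m) (lam : ℂ) (q : ℕ → ℂ) :
    Fpoly j n lam q = ∑ β : Fin j → Fin m,
      if isT j n (fun s => (β s : ℕ)) then ∏ s, (lam - q (β s)) else 0 := by
  refine Fintype.sum_of_injective (fun β s => Fin.castLE h (β s))
    (fun β γ hβγ => funext fun s => Fin.castLE_injective h (congrFun hβγ s)) _ _ ?_ fun β => rfl
  intro γ hγ
  refine if_neg fun ⟨_, hbd, _⟩ => hγ ⟨fun s => ⟨γ s, ?_⟩, funext fun s => Fin.ext rfl⟩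
  have : (γ s : ℕ) ≤ n := (hbd s).2
  omega

open Classical in
theorem Fpoly_succ_eq_sum (j N : ℕ) (lam : ℂ) (q : ℕ → ℂ) :
    Fpoly (j + 1) N lam q = ∑ x ∈ Finset.range N,
      if Odd ((N : ℤ) - x) then (lam - q (x + 1)) * Fpoly j x lam q else 0 := by
  rw [Fpoly_eq_sum_fin le_rfl, ← (Fin.snocEquiv fun _ => Fin (N + 2)).sum_comp,
    Fintype.sum_prod_type, Fin.sum_univ_succ]
  have hcoe (b : Fin j → Fin (N + 2)) (y : Fin (N + 2)) :
      (fun s => ((Fin.snoc b y : Fin (j + 1) → Fin (N + 2)) s : ℕ))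
        = Fin.snoc (fun s => (b s : ℕ)) (y : ℕ) :=
    Fin.comp_snoc Fin.val b y
  have hlast (x : Fin (N + 1)) : (∑ b : Fin j → Fin (N + 2),
      if isT (j + 1) N (fun s => ((Fin.snoc b x.succ : Fin (j + 1) → Fin (N + 2)) s : ℕ))
        then ∏ s, (lam - q ((Fin.snoc b x.succ : Fin (j + 1) → Fin (N + 2)) s)) else 0)
      = if (x : ℕ) < N ∧ Odd ((N : ℤ) - x) then (lam - q (x + 1)) * Fpoly j x lam q else 0 := by
    simp only [hcoe, Fin.val_succ, isT_snoc_succ_iff, Fin.prod_univ_castSucc, Fin.snoc_castSucc,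
      Fin.snoc_last]
    by_cases hx : (x : ℕ) < N ∧ Odd ((N : ℤ) - x)
    · rw [if_pos hx, Fpoly_eq_sum_fin (m := N + 2) (by omega), Finset.mul_sum]
      refine Finset.sum_congr rfl fun b _ => ?_
      simp only [hx, and_true]
      split_ifs <;> ring
    · simp only [hx, and_false, if_false, Finset.sum_const_zero]
  simp only [Fin.snocEquiv_apply, hlast]
  simp only [hcoe, Fin.val_zero, not_isT_snoc_zero, if_false, Finset.sum_const_zero, zero_add]
  rw [Fin.sum_univ_eq_sum_range (fun x => if x < N ∧ Odd ((N : ℤ) - x)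
      then (lam - q (x + 1)) * Fpoly j x lam q else 0), Finset.sum_range_succ]
  simp only [lt_irrefl, false_and, if_false, add_zero]
  exact Finset.sum_congr rfl fun x hx => by
    simp only [Finset.mem_range.1 hx, true_and]

theorem Fpoly_recursion_general (j n : ℕ) (lam : ℂ) (q : ℕ → ℂ) :
    Fpoly (j + 1) (n + 2) lam q
      = (lam - q (n + 2)) * Fpoly j (n + 1) lam q + Fpoly (j + 1) n lam q := by
  have hgap (x : ℕ) : Odd (((n + 2 : ℕ) : ℤ) - x) ↔ Odd ((n : ℤ) - x) := by
    rw [Nat.cast_add, add_sub_right_comm, Int.odd_add]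
    simp
  rw [Fpoly_succ_eq_sum, Fpoly_succ_eq_sum, Finset.sum_range_succ, Finset.sum_range_succ]
  simp only [hgap]
  push_cast
  simp only [sub_self, sub_add_cancel_left, odd_neg, odd_one, Int.not_odd_zero, if_true, if_false,
    add_zero]
  ring

theorem Fpoly_recursion (j n : ℕ) (hj : 1 ≤ j) (hn : j ≤ n - 1) (lam : ℂ) (q : ℕ → ℂ) :
    Fpoly (j + 1) (n + 2) lam q
      = (lam - q (n + 2)) * Fpoly j (n + 1) lam q + Fpoly (j + 1) n lam q :=
  Fpoly_recursion_general j n lam q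
end

section
/- Let θ_n(λ,q) satisfy the same recursion θ_{n+1} = (λ - q_{n+1}) θ_n - θ_{n-1} with θ_0 = 1, θ_1 = 0. Then for n even, θ_{n+1}(λ,q) = (-1)^{n/2} Σ_{j=0}^{(n-2)/2} (-1)^j F_{2j+1}^n(λ,q), and for n odd, θ_{n+1}(λ,q) = (-1)^{(n+1)/2} Σ_{j=0}^{(n-1)/2} (-1)^j F_{2j}^n(λ,q). -/
open Classical in
lemma Fpoly_eq (j n N : ℕ) (hN : n + 2 ≤ N) (lam : ℂ) (q : ℕ → ℂ) :
    Fpoly j n lam q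
      = ∑ α ∈ Fintype.piFinset (fun _ : Fin j => Finset.range N),
          if isT j n α then ∏ s, (lam - q (α s)) else 0 := by
  classical
  have h1 : Fpoly j n lam q
      = ∑ α ∈ Fintype.piFinset (fun _ : Fin j => Finset.range (n + 2)),
          if isT j n α then ∏ s, (lam - q (α s)) else 0 := by
    unfold Fpoly
    refine Finset.sum_nbij' (fun β => fun s => (β s : ℕ))
      (fun α => fun s => (⟨α s % (n + 2), Nat.mod_lt _ (by omega)⟩ : Fin (n + 2)))
      ?_ ?_ ?_ ?_ ?_
    · intro β _
      simp [Fintype.mem_piFinset, Finset.mem_range, (β _).is_lt]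
    · intro α _; exact Finset.mem_univ _
    · intro β _; funext s; exact Fin.ext (Nat.mod_eq_of_lt (β s).is_lt)
    · intro α hα; funext s
      exact Nat.mod_eq_of_lt (Finset.mem_range.mp (Fintype.mem_piFinset.mp hα s))
    · intro β _; rfl
  rw [h1]
  refine Finset.sum_subset
    (Fintype.piFinset_subset _ _ fun a => Finset.range_subset_range.mpr hN) ?_
  intro α _ hα
  rw [if_neg]
  rintro ⟨-, h2, -⟩
  apply hα
  rw [Fintype.mem_piFinset]
  intro s
  exact Finset.mem_range.mpr (by have := (h2 s).2; omega)

lemma isT_last_iff (k m : ℕ) (α : Fin (k + 1) → ℕ) (hlast : α (Fin.last k) = m + 2) :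
    isT (k + 1) (m + 2) α ↔ isT k (m + 1) (α ∘ Fin.castSucc) := by
  constructor
  · rintro ⟨h1, h2, h3⟩
    have hbd : ∀ s : Fin k, α (Fin.castSucc s) ≤ m + 1 := by
      intro s
      have : α (Fin.castSucc s) < α (Fin.last k) := h1 (Fin.castSucc_lt_last s)
      omega
    refine ⟨fun a b hab => h1 (by simpa using hab), fun s => ⟨(h2 _).1, hbd s⟩, ?_⟩
    intro s
    have hh := h3 (Fin.castSucc s)
    have hcond : ((Fin.castSucc s : Fin (k+1)) : ℕ) + 1 < k + 1 := by
      simp only [Fin.coe_castSucc]; omega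
    rw [dif_pos hcond] at hh
    by_cases hc : (s : ℕ) + 1 < k
    · rw [dif_pos hc]
      have he : (⟨((Fin.castSucc s : Fin (k+1)) : ℕ) + 1, hcond⟩ : Fin (k+1))
          = Fin.castSucc ⟨(s : ℕ) + 1, hc⟩ := Fin.ext (by simp)
      rw [he] at hh
      exact hh
    · rw [dif_neg hc]
      have hk : (s : ℕ) + 1 = k := by have := s.is_lt; omega
      have he : (⟨((Fin.castSucc s : Fin (k+1)) : ℕ) + 1, hcond⟩ : Fin (k+1)) = Fin.last k :=
        Fin.ext (by simp [hk])
      rw [he, hlast] at hh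
      have : ((m + 1 : ℕ) : ℤ) + 1 - (α (Fin.castSucc s) : ℤ)
          = ((m + 2 : ℕ) : ℤ) - (α (Fin.castSucc s) : ℤ) := by push_cast; ring
      simp only [Function.comp_apply]
      rw [this]
      exact hh
  · rintro ⟨g1, g2, g3⟩
    have hsm : StrictMono α := by
      rw [Fin.strictMono_iff_lt_succ]
      intro i
      by_cases hc : (i : ℕ) + 1 < k
      · have h := g1 (show (⟨(i : ℕ), i.is_lt⟩ : Fin k) < ⟨(i : ℕ) + 1, hc⟩ from by
          simp [Fin.lt_iff_val_lt_val])
        simpa only [Function.comp_apply,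
          show Fin.castSucc (⟨(i : ℕ), i.is_lt⟩ : Fin k) = i.castSucc from Fin.ext rfl,
          show Fin.castSucc (⟨(i : ℕ) + 1, hc⟩ : Fin k) = i.succ from Fin.ext (by simp)] using h
      · have hk : (i : ℕ) + 1 = k := by have := i.is_lt; omega
        have he : i.succ = Fin.last k := Fin.ext (by simp [hk])
        rw [he, hlast]
        have h2 := (g2 i).2
        simp only [Function.comp_apply] at h2
        omega
    refine ⟨hsm, ?_, ?_⟩
    · refine Fin.lastCases ?_ ?_
      · rw [hlast]; omega
      · intro t
        have := g2 t
        simp only [Function.comp_apply] at this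
        exact ⟨this.1, by omega⟩
    · refine Fin.lastCases ?_ ?_
      · have hcond : ¬ ((Fin.last k : ℕ) + 1 < k + 1) := by simp
        rw [dif_neg hcond, hlast]
        refine ⟨0, by push_cast; ring⟩
      · intro t
        have hcond : ((Fin.castSucc t : Fin (k+1)) : ℕ) + 1 < k + 1 := by
          simp only [Fin.coe_castSucc]; omega
        rw [dif_pos hcond]
        have hh := g3 t
        by_cases hc : (t : ℕ) + 1 < k
        · rw [dif_pos hc] at hh
          have he : (⟨((Fin.castSucc t : Fin (k+1)) : ℕ) + 1, hcond⟩ : Fin (k+1))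
              = Fin.castSucc ⟨(t : ℕ) + 1, hc⟩ := Fin.ext (by simp)
          rw [he]
          exact hh
        · rw [dif_neg hc] at hh
          have hk : (t : ℕ) + 1 = k := by have := t.is_lt; omega
          have he : (⟨((Fin.castSucc t : Fin (k+1)) : ℕ) + 1, hcond⟩ : Fin (k+1)) = Fin.last k :=
            Fin.ext (by simp [hk])
          rw [he, hlast]
          have heq : ((m + 2 : ℕ) : ℤ) - (α (Fin.castSucc t) : ℤ)
              = ((m + 1 : ℕ) : ℤ) + 1 - (α (Fin.castSucc t) : ℤ) := by push_cast; ring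
          rw [heq]
          exact hh

lemma isT_last_le (k m : ℕ) (α : Fin (k + 1) → ℕ) (h : isT (k + 1) (m + 2) α)
    (hne : α (Fin.last k) ≠ m + 2) : α (Fin.last k) ≤ m := by
  obtain ⟨h1, h2, h3⟩ := h
  have hl := h3 (Fin.last k)
  have hcond : ¬ ((Fin.last k : ℕ) + 1 < k + 1) := by simp
  rw [dif_neg hcond] at hl
  rw [Int.odd_iff] at hl
  have hb := (h2 (Fin.last k)).2
  omega

lemma isT_ne_iff (k m : ℕ) (α : Fin (k + 1) → ℕ) :
    (isT (k + 1) (m + 2) α ∧ α (Fin.last k) ≠ m + 2) ↔ isT (k + 1) m α := by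
  have hcondL : ¬ ((Fin.last k : ℕ) + 1 < k + 1) := by simp
  constructor
  · rintro ⟨⟨h1, h2, h3⟩, hne⟩
    have hle : α (Fin.last k) ≤ m := isT_last_le k m α ⟨h1, h2, h3⟩ hne
    refine ⟨h1, ?_, ?_⟩
    · intro s
      have hmono : α s ≤ α (Fin.last k) := h1.monotone (Fin.le_last s)
      exact ⟨(h2 s).1, by omega⟩
    · intro s
      have hh := h3 s
      by_cases hc : (s : ℕ) + 1 < k + 1
      · rw [dif_pos hc] at hh ⊢; exact hh
      · rw [dif_neg hc] at hh ⊢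
        rw [Int.odd_iff] at hh ⊢
        omega
  · rintro ⟨h1, h2, h3⟩
    have hb := (h2 (Fin.last k)).2
    refine ⟨⟨h1, fun s => ⟨(h2 s).1, by have := (h2 s).2; omega⟩, ?_⟩, by omega⟩
    intro s
    have hh := h3 s
    by_cases hc : (s : ℕ) + 1 < k + 1
    · rw [dif_pos hc] at hh ⊢; exact hh
    · rw [dif_neg hc] at hh ⊢
      rw [Int.odd_iff] at hh ⊢
      omega

open Classical in
lemma Fpoly_zero (n : ℕ) (lam : ℂ) (q : ℕ → ℂ) : Fpoly 0 n lam q = 1 := by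
  unfold Fpoly
  have h0 : isT 0 n (fun s : Fin 0 => ((default : Fin 0 → Fin (n+2)) s : ℕ)) :=
    ⟨fun a => a.elim0, fun s => s.elim0, fun s => s.elim0⟩
  rw [Fintype.sum_eq_single (default : Fin 0 → Fin (n + 2))
    (fun β hβ => absurd (funext fun s => s.elim0) hβ)]
  rw [if_pos h0]
  simp

open Classical in
lemma Fpoly_vanish (j n : ℕ) (h : n < j) (lam : ℂ) (q : ℕ → ℂ) : Fpoly j n lam q = 0 := by
  unfold Fpoly
  refine Finset.sum_eq_zero fun β _ => ?_
  rw [if_neg]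
  rintro ⟨h1, h2, -⟩
  have hg : Function.Injective (fun s : Fin j =>
      (⟨(β s : ℕ) - 1, by
        have hx1 : 1 ≤ (β s : ℕ) := (h2 s).1
        have hx2 : (β s : ℕ) ≤ n := (h2 s).2
        omega⟩ : Fin n)) := by
    intro a b hab
    have hval : (β a : ℕ) - 1 = (β b : ℕ) - 1 := congrArg Fin.val hab
    have ha : 1 ≤ (β a : ℕ) := (h2 a).1
    have hb : 1 ≤ (β b : ℕ) := (h2 b).1
    exact h1.injective (show (β a : ℕ) = (β b : ℕ) by omega)
  have := Fintype.card_le_of_injective _ hg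
  simp at this
  omega

open Classical in
lemma Frec (k m : ℕ) (lam : ℂ) (q : ℕ → ℂ) :
    Fpoly (k + 1) (m + 2) lam q
      = (lam - q (m + 2)) * Fpoly k (m + 1) lam q + Fpoly (k + 1) m lam q := by
  classical
  rw [Fpoly_eq (k+1) (m+2) (m+4) (by omega), Fpoly_eq k (m+1) (m+4) (by omega),
    Fpoly_eq (k+1) m (m+4) (by omega)]
  set P1 := Fintype.piFinset (fun _ : Fin (k+1) => Finset.range (m+4)) with hP1
  set P0 := Fintype.piFinset (fun _ : Fin k => Finset.range (m+4)) with hP0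
  have split : ∀ α : Fin (k+1) → ℕ,
      (if isT (k+1) (m+2) α then ∏ s, (lam - q (α s)) else 0)
        = (if isT k (m+1) (α ∘ Fin.castSucc) ∧ α (Fin.last k) = m + 2
            then ∏ s, (lam - q (α s)) else 0)
          + (if isT (k+1) m α then ∏ s, (lam - q (α s)) else 0) := by
    intro α
    by_cases hQ : α (Fin.last k) = m + 2 <;> by_cases hP : isT (k+1) (m+2) α
    · rw [if_pos hP, if_pos ⟨(isT_last_iff k m α hQ).mp hP, hQ⟩,
        if_neg (fun h => ((isT_ne_iff k m α).mpr h).2 hQ), add_zero]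
    · rw [if_neg hP, if_neg (fun h => hP ((isT_last_iff k m α hQ).mpr h.1)),
        if_neg (fun h => hP ((isT_ne_iff k m α).mpr h).1)]
      simp
    · rw [if_pos hP, if_neg (fun h => hQ h.2),
        if_pos ((isT_ne_iff k m α).mp ⟨hP, hQ⟩), zero_add]
    · rw [if_neg hP, if_neg (fun h => hQ h.2),
        if_neg (fun h => hP ((isT_ne_iff k m α).mpr h).1)]
      simp
  rw [Finset.sum_congr rfl (fun α _ => split α), Finset.sum_add_distrib]
  congr 1
  · rw [Finset.mul_sum]
    simp_rw [mul_ite, mul_zero]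
    rw [← Finset.sum_filter, ← Finset.sum_filter]
    refine Finset.sum_nbij' (fun α => α ∘ Fin.castSucc) (fun α' => Fin.snoc α' (m + 2))
      ?_ ?_ ?_ ?_ ?_
    · intro α hα
      rw [Finset.mem_filter] at hα ⊢
      obtain ⟨hmem, hT, -⟩ := hα
      refine ⟨Fintype.mem_piFinset.mpr fun s => Fintype.mem_piFinset.mp hmem _, hT⟩
    · intro α' hα'
      rw [Finset.mem_filter] at hα' ⊢
      obtain ⟨hmem, hT⟩ := hα'
      have hcomp : (Fin.snoc α' (m + 2) : Fin (k+1) → ℕ) ∘ Fin.castSucc = α' := by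
        funext s; simp [Fin.snoc_castSucc]
      refine ⟨Fintype.mem_piFinset.mpr ?_, by rw [hcomp]; exact hT, Fin.snoc_last _ _⟩
      refine Fin.lastCases ?_ ?_
      · simp only [Fin.snoc_last]
        exact Finset.mem_range.mpr (by omega)
      · intro t
        simp only [Fin.snoc_castSucc]
        exact Fintype.mem_piFinset.mp hmem t
    · intro α hα
      rw [Finset.mem_filter] at hα
      obtain ⟨-, -, hlast⟩ := hα
      funext s
      refine Fin.lastCases ?_ ?_ s
      · simp only [Fin.snoc_last, hlast]
      · intro t; simp only [Fin.snoc_castSucc]; rfl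
    · intro α' _
      funext s; simp [Fin.snoc_castSucc]
    · intro α hα
      rw [Finset.mem_filter] at hα
      obtain ⟨-, -, hlast⟩ := hα
      rw [Fin.prod_univ_castSucc (f := fun s => lam - q (α s)), hlast, mul_comm]
      rfl

/-- The second fundamental solution `θ_n(λ,q)` of the discrete Schrödinger
recursion, with `θ_0 = 1`, `θ_1 = 0`, `θ_{n+1} = (λ - q_n) θ_n - θ_{n-1}`. -/
noncomputable def theta (lam : ℂ) (q : ℕ → ℂ) : ℕ → ℂ
  | 0 => 1
  | 1 => 0
  | n + 2 => (lam - q (n + 1)) * theta lam q (n + 1) - theta lam q n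

lemma theta_succ (lam : ℂ) (q : ℕ → ℂ) (j : ℕ) :
    theta lam q (j + 2) = (lam - q (j + 1)) * theta lam q (j + 1) - theta lam q j := rfl

lemma main (lam : ℂ) (q : ℕ → ℂ) : ∀ n : ℕ,
    (Even n → theta lam q (n + 1)
      = (-1 : ℂ) ^ (n / 2) * ∑ j ∈ Finset.range ((n - 2) / 2 + 1),
          (-1 : ℂ) ^ j * Fpoly (2 * j + 1) n lam q) ∧
    (Odd n → theta lam q (n + 1)
      = (-1 : ℂ) ^ ((n + 1) / 2) * ∑ j ∈ Finset.range ((n - 1) / 2 + 1),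
          (-1 : ℂ) ^ j * Fpoly (2 * j) n lam q) := by
  intro n
  induction n using Nat.twoStepInduction with
  | zero =>
    constructor
    · intro _
      rw [show (0 - 2) / 2 + 1 = 1 from rfl, Finset.sum_range_one,
        Fpoly_vanish 1 0 (by omega)]
      simp [theta]
    · intro h; simp at h
  | one =>
    constructor
    · intro h; simp at h
    · intro _
      rw [show (1 - 1) / 2 + 1 = 1 from rfl, Finset.sum_range_one, Fpoly_zero]
      rw [theta_succ]
      simp [theta]
  | more n ih1 ih2 =>
    constructor
    · -- Even case : n + 2 even, so n even
      intro hE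
      have hEn : Even n := by
        rcases hE with ⟨r, hr⟩; exact ⟨r - 1, by omega⟩
      obtain ⟨t, rfl⟩ := hEn
      have hOdd : Odd (t + t + 1) := ⟨t, by ring⟩
      have ihO := ih2.2 hOdd
      have ihE := ih1.1 (Even.add_self t)
      set A := ∑ j ∈ Finset.range (t + 1), (-1 : ℂ) ^ j * Fpoly (2 * j) (t + t + 1) lam q
        with hA
      set B := ∑ j ∈ Finset.range ((t + t - 2) / 2 + 1),
          (-1 : ℂ) ^ j * Fpoly (2 * j + 1) (t + t) lam q with hB
      rw [show (t + t + 1 - 1) / 2 + 1 = t + 1 from by omega,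
        show (t + t + 1 + 1) / 2 = t + 1 from by omega] at ihO
      -- goal sum range : (t + t + 2 - 2)/2 + 1 = t + 1
      rw [show (t + t + 2 - 2) / 2 + 1 = t + 1 from by omega,
        show (t + t + 2) / 2 = t + 1 from by omega]
      have hBext : ∑ j ∈ Finset.range (t + 1), (-1 : ℂ) ^ j * Fpoly (2 * j + 1) (t + t) lam q
          = B := by
        rcases Nat.eq_zero_or_pos t with h0 | hpos
        · subst h0; rfl
        · rw [hB, show (t + t - 2) / 2 + 1 = t from by omega, Finset.sum_range_succ,
            Fpoly_vanish (2 * t + 1) (t + t) (by omega), mul_zero, add_zero]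
      have hsum : ∑ j ∈ Finset.range (t + 1), (-1 : ℂ) ^ j * Fpoly (2 * j + 1) (t + t + 2) lam q
          = (lam - q (t + t + 2)) * A + B := by
        rw [← hBext, hA, Finset.mul_sum, ← Finset.sum_add_distrib]
        refine Finset.sum_congr rfl fun j _ => ?_
        rw [Frec (2 * j) (t + t) lam q]
        ring
      rw [hsum, show t + t + 2 + 1 = (t + t + 1) + 2 from rfl, theta_succ, ihO, ihE,
        show t + t + 1 + 1 = t + t + 2 from rfl, show (t + t) / 2 = t from by omega,
        pow_succ]
      ring
    · -- Odd case : n + 2 odd, so n odd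
      intro hO
      have hOn : Odd n := by
        rcases hO with ⟨r, hr⟩; exact ⟨r - 1, by omega⟩
      obtain ⟨t, rfl⟩ := hOn
      have hEv : Even (2 * t + 1 + 1) := ⟨t + 1, by ring⟩
      have ihE := ih2.1 hEv
      have ihOprev := ih1.2 ⟨t, rfl⟩
      set A := ∑ j ∈ Finset.range (t + 1),
          (-1 : ℂ) ^ j * Fpoly (2 * j + 1) (2 * t + 1 + 1) lam q with hA
      set B := ∑ j ∈ Finset.range (t + 1), (-1 : ℂ) ^ j * Fpoly (2 * j) (2 * t + 1) lam q
        with hB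
      rw [show (2 * t + 1 + 1 - 2) / 2 + 1 = t + 1 from by omega,
        show (2 * t + 1 + 1) / 2 = t + 1 from by omega] at ihE
      rw [show (2 * t + 1 - 1) / 2 + 1 = t + 1 from by omega,
        show (2 * t + 1 + 1) / 2 = t + 1 from by omega] at ihOprev
      rw [show (2 * t + 1 + 2 - 1) / 2 + 1 = t + 2 from by omega,
        show (2 * t + 1 + 2 + 1) / 2 = t + 2 from by omega]
      have hsum : ∑ j ∈ Finset.range (t + 2),
            (-1 : ℂ) ^ j * Fpoly (2 * j) (2 * t + 1 + 2) lam q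
          = -((lam - q (2 * t + 1 + 2)) * A) + B := by
        rw [Finset.sum_range_succ'
          (fun j => (-1 : ℂ) ^ j * Fpoly (2 * j) (2 * t + 1 + 2) lam q) (t + 1)]
        have hterm : ∀ i ∈ Finset.range (t + 1),
            (-1 : ℂ) ^ (i + 1) * Fpoly (2 * (i + 1)) (2 * t + 1 + 2) lam q
              = -((lam - q (2 * t + 1 + 2))
                    * ((-1 : ℂ) ^ i * Fpoly (2 * i + 1) (2 * t + 1 + 1) lam q))
                + (-1 : ℂ) ^ (i + 1) * Fpoly (2 * (i + 1)) (2 * t + 1) lam q := by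
          intro i _
          rw [show 2 * (i + 1) = (2 * i + 1) + 1 from by ring,
            Frec (2 * i + 1) (2 * t + 1) lam q, pow_succ]
          ring
        rw [Finset.sum_congr rfl hterm, Finset.sum_add_distrib]
        have h2 : ∑ i ∈ Finset.range (t + 1),
            -((lam - q (2 * t + 1 + 2))
                * ((-1 : ℂ) ^ i * Fpoly (2 * i + 1) (2 * t + 1 + 1) lam q))
            = -((lam - q (2 * t + 1 + 2)) * A) := by
          rw [hA, Finset.mul_sum, ← Finset.sum_neg_distrib]
        have h3 : ∑ i ∈ Finset.range (t + 1),
            (-1 : ℂ) ^ (i + 1) * Fpoly (2 * (i + 1)) (2 * t + 1) lam q = B - 1 := by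
          have hs := Finset.sum_range_succ'
            (fun j => (-1 : ℂ) ^ j * Fpoly (2 * j) (2 * t + 1) lam q) (t + 1)
          have hs2 := Finset.sum_range_succ
            (fun j => (-1 : ℂ) ^ j * Fpoly (2 * j) (2 * t + 1) lam q) (t + 1)
          rw [Fpoly_vanish (2 * (t + 1)) (2 * t + 1) (by omega)] at hs2
          rw [Fpoly_zero] at hs
          rw [hs2] at hs
          rw [hB]
          linear_combination -hs
        rw [h2, h3, Fpoly_zero]
        ring
      rw [hsum, show 2 * t + 1 + 2 + 1 = (2 * t + 1 + 1) + 2 from rfl, theta_succ, ihE,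
        ihOprev, show 2 * t + 1 + 1 + 1 = 2 * t + 1 + 2 from rfl, pow_succ]
      ring

theorem theta_eq_sum_Fpoly (n : ℕ) (hn : 1 ≤ n) (lam : ℂ) (q : ℕ → ℂ) :
    (Even n → theta lam q (n + 1)
      = (-1 : ℂ) ^ (n / 2) * ∑ j ∈ Finset.range ((n - 2) / 2 + 1),
          (-1 : ℂ) ^ j * Fpoly (2 * j + 1) n lam q) ∧
    (Odd n → theta lam q (n + 1)
      = (-1 : ℂ) ^ ((n + 1) / 2) * ∑ j ∈ Finset.range ((n - 1) / 2 + 1),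
          (-1 : ℂ) ^ j * Fpoly (2 * j) n lam q) := main lam q n
end

section
/- Define G_j^n(λ,q) = Σ_{α ∈ D_j^n} Π_s (λ - q_{α_s}) for 2 ≤ j ≤ n, G_1^n = Σ_{i=1}^n (λ - q_i), G_0^n = 2. Then for 1 ≤ j < n, G_j^n(λ,q) = F_j^n(λ,q) + F_j^{n-1}(λ,q), and G_n^n = F_n^n. -/
/-- The predicate describing membership in `D_j^n`: `α` is strictly increasing,
`1 ≤ α s ≤ n`, and the consecutive differences `α (s+1) - α s` are odd for
`s = 1, ..., j-1` (no endpoint condition). -/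
def isD (j n : ℕ) (α : Fin j → ℕ) : Prop :=
  StrictMono α ∧ (∀ s, 1 ≤ α s ∧ α s ≤ n) ∧
    ∀ (s : Fin j) (h : (s : ℕ) + 1 < j), Odd ((α ⟨(s : ℕ) + 1, h⟩ : ℤ) - (α s : ℤ))

open Classical in
/-- `Gpoly j n lam q = G_j^n(λ,q) = Σ_{α ∈ D_j^n} Π_{s=1}^j (λ - q (α s))`,
with `G_0^n = 2`. -/
noncomputable def Gpoly (j n : ℕ) (lam : ℂ) (q : ℕ → ℂ) : ℂ :=
  if j = 0 then 2
  else ∑ β : Fin j → Fin (n + 2),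
    if isD j n (fun s => (β s : ℕ)) then ∏ s, (lam - q (β s)) else 0

lemma isT_iff_s7 {j n : ℕ} (hj : 1 ≤ j) (α : Fin j → ℕ) :
    isT j n α ↔ isD j n α ∧ Odd ((n : ℤ) + 1 - (α ⟨j - 1, by omega⟩ : ℤ)) := by
  constructor
  · rintro ⟨h1, h2, h3⟩
    refine ⟨⟨h1, h2, fun s h => ?_⟩, ?_⟩
    · have := h3 s; rwa [dif_pos h] at this
    · have := h3 ⟨j - 1, by omega⟩
      rwa [dif_neg (by simp; omega)] at this
  · rintro ⟨⟨h1, h2, h3⟩, h4⟩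
    refine ⟨h1, h2, fun s => ?_⟩
    by_cases h : (s : ℕ) + 1 < j
    · rw [dif_pos h]; exact h3 s h
    · rw [dif_neg h]
      have hs : s = ⟨j - 1, by omega⟩ := by
        apply Fin.ext; have := s.2; simp; omega
      rw [hs]; exact h4

lemma lb {j : ℕ} {α : Fin j → ℕ} (h : StrictMono α) (h1 : ∀ s, 1 ≤ α s) (s : Fin j) :
    (s : ℕ) + 1 ≤ α s := by
  obtain ⟨i, hi⟩ := s
  induction i with
  | zero => exact h1 _
  | succ k ih =>
    have hk : k < j := by omega
    have h2 := h (show (⟨k, hk⟩ : Fin j) < ⟨k + 1, hi⟩ from by simp [Fin.lt_def])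
    have h3 := ih hk
    simp only [Fin.val_mk] at h3 ⊢
    omega

lemma isD_split {j n : ℕ} (hj : 1 ≤ j) (hn : 1 ≤ n) (α : Fin j → ℕ) :
    (isD j n α ↔ (isT j n α ∨ isT j (n - 1) α)) ∧ ¬(isT j n α ∧ isT j (n - 1) α) := by
  set a : ℕ := α ⟨j - 1, by omega⟩ with ha
  have hcast : ((n - 1 : ℕ) : ℤ) = (n : ℤ) - 1 := by
    rw [Nat.cast_sub hn]; simp
  have hTn : isT j n α ↔ isD j n α ∧ Odd ((n : ℤ) + 1 - (a : ℤ)) := isT_iff_s7 hj α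
  have hTn1 : isT j (n - 1) α ↔ isD j (n - 1) α ∧ Odd ((n : ℤ) - (a : ℤ)) := by
    rw [isT_iff_s7 hj α, hcast]
    constructor
    · rintro ⟨h1, h2⟩; exact ⟨h1, by convert h2 using 1; ring⟩
    · rintro ⟨h1, h2⟩; exact ⟨h1, by convert h2 using 1; ring⟩
  have hmax : ∀ s : Fin j, isD j n α → α s ≤ a := by
    intro s hD
    exact hD.1.monotone (show s ≤ ⟨j - 1, by omega⟩ from by
      rw [Fin.le_def]; have := s.2; simp; omega)
  have hDn1 : isD j (n - 1) α ↔ isD j n α ∧ a ≤ n - 1 := by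
    constructor
    · rintro ⟨h1, h2, h3⟩
      refine ⟨⟨h1, fun s => ⟨(h2 s).1, by have := (h2 s).2; omega⟩, h3⟩, (h2 _).2⟩
    · rintro ⟨⟨h1, h2, h3⟩, h4⟩
      refine ⟨h1, fun s => ⟨(h2 s).1, ?_⟩, h3⟩
      have := hmax s ⟨h1, h2, h3⟩
      omega
  constructor
  · constructor
    · intro hD
      have haa : a ≤ n := (hD.2.1 _).2
      by_cases h : Odd ((n : ℤ) + 1 - (a : ℤ))
      · exact Or.inl (hTn.2 ⟨hD, h⟩)
      · rw [Int.not_odd_iff_even, Int.even_iff] at h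
        have h1 : Odd ((n : ℤ) - (a : ℤ)) := by rw [Int.odd_iff]; omega
        have h2 : a ≤ n - 1 := by omega
        exact Or.inr (hTn1.2 ⟨hDn1.2 ⟨hD, h2⟩, h1⟩)
    · rintro (h | h)
      · exact (hTn.1 h).1
      · exact (hDn1.1 (hTn1.1 h).1).1
  · rintro ⟨h1, h2⟩
    have o1 := (hTn.1 h1).2
    have o2 := (hTn1.1 h2).2
    rw [Int.odd_iff] at o1 o2
    omega

lemma sum_shrink {j m k : ℕ} (hmk : m ≤ k) (g : (Fin j → ℕ) → ℂ)
    (hg : ∀ a : Fin j → ℕ, g a ≠ 0 → ∀ s, a s < m + 1) :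
    ∑ β : Fin j → Fin (k + 1), g (fun s => (β s : ℕ)) =
    ∑ β : Fin j → Fin (m + 1), g (fun s => (β s : ℕ)) := by
  classical
  set e : (Fin j → Fin (m + 1)) → (Fin j → Fin (k + 1)) :=
    fun β s => Fin.castLE (by omega) (β s) with he
  have hinj : Function.Injective e := by
    intro β γ h
    funext s
    have := congrFun h s
    simpa [he, Fin.ext_iff] using (by exact congrArg Fin.val this : ((e β s : ℕ)) = (e γ s : ℕ))
  have h1 : ∑ β : Fin j → Fin (m + 1), g (fun s => (β s : ℕ)) =
      ∑ β ∈ Finset.univ.image e, g (fun s => (β s : ℕ)) := by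
    rw [Finset.sum_image (fun x _ y _ h => hinj h)]
    rfl
  rw [h1]
  symm
  apply Finset.sum_subset (Finset.subset_univ _)
  intro β _ hβ
  by_contra hne
  have hlt : ∀ s, (β s : ℕ) < m + 1 := hg _ hne
  apply hβ
  refine Finset.mem_image.2 ⟨fun s => ⟨(β s : ℕ), hlt s⟩, Finset.mem_univ _, ?_⟩
  funext s
  apply Fin.ext
  simp [he]

open Classical in
lemma main_split (lam : ℂ) (q : ℕ → ℂ) {j n' : ℕ} (hj : 1 ≤ j) :
    (∑ β : Fin j → Fin (n' + 1 + 2),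
      if isD j (n' + 1) (fun s => (β s : ℕ)) then ∏ s, (lam - q (β s)) else 0)
    = Fpoly j (n' + 1) lam q + Fpoly j n' lam q := by
  have hg : ∀ a : Fin j → ℕ,
      (if isT j n' a then ∏ s, (lam - q (a s)) else 0) ≠ 0 → ∀ s, a s < n' + 1 + 1 := by
    intro a hne s
    by_cases h : isT j n' a
    · have := (h.2.1 s).2; omega
    · simp [h] at hne
  have h2 : (∑ β : Fin j → Fin (n' + 2),
        if isT j n' (fun s => (β s : ℕ)) then ∏ s, (lam - q (β s)) else 0)
      = ∑ β : Fin j → Fin (n' + 1 + 2),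
        if isT j n' (fun s => (β s : ℕ)) then ∏ s, (lam - q (β s)) else 0 :=
    (sum_shrink (show n' + 1 ≤ n' + 1 + 1 by omega)
      (fun a => if isT j n' a then ∏ s, (lam - q (a s)) else 0) hg).symm
  unfold Fpoly
  rw [h2, ← Finset.sum_add_distrib]
  apply Finset.sum_congr rfl
  intro β _
  obtain ⟨hiff, hexcl⟩ := isD_split hj (show 1 ≤ n' + 1 by omega) (fun s => ((β s : ℕ)))
  simp only [Nat.add_sub_cancel] at hiff hexcl
  by_cases h1 : isT j (n' + 1) fun s => (β s : ℕ) <;>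
    by_cases hh2 : isT j n' fun s => (β s : ℕ)
  · exact absurd ⟨h1, hh2⟩ hexcl
  · rw [if_pos (hiff.2 (Or.inl h1)), if_pos h1, if_neg hh2, add_zero]
  · rw [if_pos (hiff.2 (Or.inr hh2)), if_neg h1, if_pos hh2, zero_add]
  · rw [if_neg (fun hD => by rcases hiff.1 hD with h | h; exacts [h1 h, hh2 h]),
      if_neg h1, if_neg hh2, add_zero]

lemma diag {j n : ℕ} (hn : j = n) (hj : 1 ≤ n) (α : Fin j → ℕ) :
    isD j n α ↔ isT j n α := by
  subst hn
  constructor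
  · intro hD
    refine (isT_iff_s7 hj α).2 ⟨hD, ?_⟩
    have hub := (hD.2.1 ⟨j - 1, by omega⟩).2
    have hlb := lb hD.1 (fun s => (hD.2.1 s).1) ⟨j - 1, by omega⟩
    simp only [Fin.val_mk] at hlb
    have ha : α ⟨j - 1, by omega⟩ = j := by omega
    rw [ha]
    exact ⟨0, by ring⟩
  · intro hT
    exact ((isT_iff_s7 hj α).1 hT).1

theorem Gpoly_eq_Fpoly_add_Fpoly (lam : ℂ) (q : ℕ → ℂ) :
    (∀ j n : ℕ, 1 ≤ j → j < n →
      Gpoly j n lam q = Fpoly j n lam q + Fpoly j (n - 1) lam q) ∧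
    (∀ n : ℕ, 1 ≤ n → Gpoly n n lam q = Fpoly n n lam q) := by
  constructor
  · intro j n hj hn
    obtain ⟨n', rfl⟩ : ∃ n', n = n' + 1 := ⟨n - 1, by omega⟩
    rw [Nat.add_sub_cancel]
    unfold Gpoly
    rw [if_neg (by omega)]
    exact main_split lam q hj
  · intro n hn
    obtain ⟨n', rfl⟩ : ∃ m, n = m + 1 := ⟨n - 1, by omega⟩
    unfold Gpoly Fpoly
    rw [if_neg (by omega)]
    apply Finset.sum_congr rfl
    intro β _
    have hiff := diag rfl hn (fun s => (β s : ℕ))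
    by_cases h : isT (n' + 1) (n' + 1) (fun s => (β s : ℕ))
    · rw [if_pos (hiff.2 h), if_pos h]
    · rw [if_neg (fun hD => h (hiff.1 hD)), if_neg h]
end

section
/- Let N+1 = 2k, let M_ν be the cyclic shift matrix on ℝ^{2k} (M_ν q = (q_2,...,q_{2k}, q_1)), and define f_s(q) = ⟨q, M_ν^s q⟩ for s = 0,1,...,k. Then the polynomials f_0,...,f_k form a basis of the vector space P_2 of homogeneous quadratic polynomials f on ℝ^{2k} satisfying f(M_ν q) = f(q) for all q. -/
/-!
A cyclically invariant quadratic form has the same coefficient on `X i * X j` as on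
`X (i + m) * X (j + m)`, so its coefficients depend only on `j - i` up to sign, i.e. it is
determined by the coefficients `c_t` of `X 0 * X t` for `0 ≤ t ≤ n / 2`. The functionals
`c_t` are biorthogonal to `f_0, …, f_{n/2}` (`c_t f_s = 0` for `s ≠ t`, `c_s f_s ∈ {1, 2}`), so
these `f_s` form a basis of the invariant quadratic forms; the theorem is the case `n = 2k`.
-/

open MvPolynomial

open Finset Fin.CommRing

theorem Fin.val_le_half_or_val_neg_le_half {n : ℕ} (t : Fin n) :
    t.val ≤ n / 2 ∨ (-t).val ≤ n / 2 := by
  rw [Fin.val_neg']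
  rcases Nat.eq_zero_or_pos t.val with h | h
  · omega
  · rw [Nat.mod_eq_of_lt (by omega)]; omega

theorem Submodule.linearIndependent_and_span_eq_of_biorthogonal {ι K M : Type*} [Finite ι]
    [Field K] [AddCommGroup M] [Module K M] {P : Submodule K M} {v : ι → M}
    (ε : ι → Module.Dual K M) (hvP : ∀ i, v i ∈ P) (hself : ∀ i, ε i (v i) ≠ 0)
    (hne : Pairwise fun i j => ε i (v j) = 0) (htotal : ∀ x ∈ P, (∀ i, ε i x = 0) → x = 0) :
    LinearIndependent K v ∧ span K (Set.range v) = P := by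
  have hdual : Module.DualBases (fun i => (⟨v i, hvP i⟩ : P))
      (fun i => (ε i (v i))⁻¹ • (ε i ∘ₗ P.subtype)) :=
    { eval_same := fun i => by simp [hself i]
      eval_of_ne := fun i j hij => by simp [hne hij]
      total := fun {x y} hxy => by
        refine sub_eq_zero.mp (Subtype.ext (htotal _ (x - y).2 fun i => ?_))
        simpa [hself i, sub_eq_zero] using hxy i }
  have hli := hdual.basis.linearIndependent
  have hspan := hdual.basis.span_eq
  rw [hdual.coe_basis] at hli hspan
  refine ⟨hli.map' P.subtype P.ker_subtype, ?_⟩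
  simpa [Submodule.map_span, ← Set.range_comp, Function.comp_def] using
    congrArg (Submodule.map P.subtype) hspan

namespace CyclicQuadratic

noncomputable section

section Pairs

variable {σ R : Type*} [CommSemiring R]

def pairExp (i j : σ) : σ →₀ ℕ := Finsupp.single i 1 + Finsupp.single j 1

theorem pairExp_comm (i j : σ) : pairExp i j = pairExp j i := add_comm _ _

theorem pairExp_eq_pairExp_iff {i j a b : σ} :
    pairExp i j = pairExp a b ↔ (i = a ∧ j = b) ∨ (i = b ∧ j = a) := by
  rw [pairExp, pairExp, Finsupp.single_add_single_eq_single_add_single one_ne_zero one_ne_zero]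
  simp

theorem mapDomain_pairExp {τ : Type*} (f : σ → τ) (i j : σ) :
    Finsupp.mapDomain f (pairExp i j) = pairExp (f i) (f j) := by
  simp [pairExp, Finsupp.mapDomain_add]

theorem exists_eq_pairExp_of_degree_eq_two {d : σ →₀ ℕ} (hd : d.degree = 2) :
    ∃ i j, d = pairExp i j := by
  obtain ⟨i, j, hij⟩ := Multiset.card_eq_two.mp ((Finsupp.card_toMultiset d).trans hd)
  classical
  refine ⟨i, j, Finsupp.orderIsoMultiset.injective ?_⟩
  simp [Finsupp.coe_orderIsoMultiset, hij, pairExp, Multiset.singleton_add]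

theorem X_mul_X_eq_monomial (i j : σ) :
    (X i * X j : MvPolynomial σ R) = monomial (pairExp i j) 1 := by
  rw [X, X, monomial_mul, one_mul, pairExp]

end Pairs

section Cyclic

variable {R : Type*} [CommSemiring R] {n : ℕ}

-- The paper's `P_2` is `homogeneousSubmodule (Fin n) R 2 ⊓ cyclicInvariants R n`.
variable (R n) in
def cyclicInvariants [NeZero n] : Submodule R (MvPolynomial (Fin n) R) :=
  LinearMap.eqLocus (rename (· + 1 : Fin n → Fin n)).toLinearMap LinearMap.id

-- The paper's `f_s(q) = ⟨q, M_ν^s q⟩`.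
variable (R) in
def cyclicPairSum (s : Fin n) : MvPolynomial (Fin n) R :=
  ∑ i, X i * X (i + s)

theorem isHomogeneous_cyclicPairSum (s : Fin n) : (cyclicPairSum R s).IsHomogeneous 2 :=
  IsHomogeneous.sum _ _ _ fun i _ => (isHomogeneous_X R i).mul (isHomogeneous_X R (i + s))

theorem coeff_cyclicPairSum (s : Fin n) (d : Fin n →₀ ℕ) :
    coeff d (cyclicPairSum R s) = #{i | pairExp i (i + s) = d} := by
  simp [cyclicPairSum, coeff_sum, X_mul_X_eq_monomial, coeff_monomial]

variable [NeZero n]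

theorem mem_cyclicInvariants {p : MvPolynomial (Fin n) R} :
    p ∈ cyclicInvariants R n ↔ rename (· + 1) p = p := Iff.rfl

theorem mem_cyclicInvariants_iff_eval {S : Type*} [CommRing S] [IsDomain S] [Infinite S]
    {p : MvPolynomial (Fin n) S} :
    p ∈ cyclicInvariants S n ↔ ∀ q : Fin n → S, eval (fun i => q (i + 1)) p = eval q p := by
  rw [mem_cyclicInvariants, MvPolynomial.funext_iff]
  simp only [eval_rename, Function.comp_def]

theorem rename_add_eq_self {p : MvPolynomial (Fin n) R} (hp : p ∈ cyclicInvariants R n)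
    (m : Fin n) : rename (· + m) p = p := by
  obtain ⟨m, rfl⟩ : ∃ j : ℕ, (j : Fin n) = m := ⟨m.val, Fin.cast_val_eq_self m⟩
  induction m with
  | zero => simp only [Nat.cast_zero, add_zero]; exact rename_id_apply p
  | succ m ih =>
    have hcomp : (· + ((m + 1 : ℕ) : Fin n)) = (· + 1) ∘ (· + (m : Fin n)) := by
      funext i; simp only [Function.comp_apply]; push_cast; ring
    rw [hcomp, ← rename_rename, ih, mem_cyclicInvariants.mp hp]

theorem coeff_pairExp_add {p : MvPolynomial (Fin n) R} (hp : p ∈ cyclicInvariants R n)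
    (i j m : Fin n) : coeff (pairExp (i + m) (j + m)) p = coeff (pairExp i j) p := by
  have := coeff_rename_mapDomain (· + m) (add_left_injective m) p (pairExp i j)
  rwa [mapDomain_pairExp, rename_add_eq_self hp] at this

theorem coeff_pairExp_eq_coeff_pairExp_zero_sub {p : MvPolynomial (Fin n) R}
    (hp : p ∈ cyclicInvariants R n) (i j : Fin n) :
    coeff (pairExp i j) p = coeff (pairExp 0 (j - i)) p := by
  simpa using coeff_pairExp_add hp 0 (j - i) i

theorem coeff_pairExp_zero_neg {p : MvPolynomial (Fin n) R} (hp : p ∈ cyclicInvariants R n)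
    (t : Fin n) : coeff (pairExp 0 (-t)) p = coeff (pairExp 0 t) p := by
  rw [← coeff_pairExp_add hp 0 (-t) t]
  simp [pairExp_comm]

theorem eq_zero_of_coeff_pairExp_zero_eq_zero {p : MvPolynomial (Fin n) R}
    (hhom : p.IsHomogeneous 2) (hp : p ∈ cyclicInvariants R n)
    (hcoeff : ∀ t : Fin n, t.val ≤ n / 2 → coeff (pairExp 0 t) p = 0) : p = 0 := by
  ext d
  by_cases hd : d.degree = 2
  · obtain ⟨i, j, rfl⟩ := exists_eq_pairExp_of_degree_eq_two hd
    rw [coeff_pairExp_eq_coeff_pairExp_zero_sub hp, coeff_zero]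
    rcases Fin.val_le_half_or_val_neg_le_half (j - i) with h | h
    · exact hcoeff _ h
    · rw [← coeff_pairExp_zero_neg hp, hcoeff _ h]
  · rw [hhom.coeff_eq_zero hd, coeff_zero]

theorem cyclicPairSum_mem_cyclicInvariants (s : Fin n) :
    cyclicPairSum R s ∈ cyclicInvariants R n := by
  rw [mem_cyclicInvariants, cyclicPairSum, map_sum]
  simp only [map_mul, rename_X, add_right_comm _ s (1 : Fin n)]
  exact Equiv.sum_comp (Equiv.addRight 1) fun i => X i * X (i + s)

theorem coeff_pairExp_cyclicPairSum_of_ne {s t : Fin n} (hs : s.val ≤ n / 2)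
    (ht : t.val ≤ n / 2) (hst : s ≠ t) : coeff (pairExp 0 t) (cyclicPairSum R s) = 0 := by
  rw [coeff_cyclicPairSum, filter_eq_empty_iff.mpr, card_empty, Nat.cast_zero]
  intro i _ h
  rcases pairExp_eq_pairExp_iff.mp h with ⟨rfl, hsum⟩ | ⟨rfl, hsum⟩
  · exact hst (by simpa using hsum)
  · -- `t + s ≡ 0 (mod n)` with `s, t ≤ n / 2` forces `s = t`.
    have hval := congrArg Fin.val hsum
    rw [Fin.val_add, Fin.val_zero] at hval
    refine hst (Fin.ext ?_)
    rcases Nat.lt_or_ge (i.val + s.val) n with hlt | hge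
    · rw [Nat.mod_eq_of_lt hlt] at hval; omega
    · omega

-- The coefficient is `1`, or `2` when `s = -s ≠ 0`.
theorem coeff_pairExp_cyclicPairSum_self_ne_zero [CharZero R] (s : Fin n) :
    coeff (pairExp 0 s) (cyclicPairSum R s) ≠ 0 := by
  rw [coeff_cyclicPairSum, Nat.cast_ne_zero, ← pos_iff_ne_zero, card_pos]
  exact ⟨0, by simp⟩

end Cyclic

theorem half_add_one_le (n : ℕ) [NeZero n] : n / 2 + 1 ≤ n := by
  have := NeZero.pos n
  omega

def halfCyclicPairSum (R : Type*) [CommSemiring R] (n : ℕ) [NeZero n] (s : Fin (n / 2 + 1)) :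
    MvPolynomial (Fin n) R :=
  cyclicPairSum R (s.castLE (half_add_one_le n))

theorem linearIndependent_halfCyclicPairSum_and_span_eq (K : Type*) [Field K] [CharZero K]
    (n : ℕ) [NeZero n] :
    LinearIndependent K (halfCyclicPairSum K n) ∧
      Submodule.span K (Set.range (halfCyclicPairSum K n)) =
        homogeneousSubmodule (Fin n) K 2 ⊓ cyclicInvariants K n := by
  have hval (s : Fin (n / 2 + 1)) : (s.castLE (half_add_one_le n)).val ≤ n / 2 := by
    simpa using Nat.lt_succ_iff.mp s.isLt
  refine Submodule.linearIndependent_and_span_eq_of_biorthogonal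
    (fun s => lcoeff K (pairExp 0 (s.castLE (half_add_one_le n))))
    (fun s => ⟨isHomogeneous_cyclicPairSum _, cyclicPairSum_mem_cyclicInvariants _⟩)
    (fun s => coeff_pairExp_cyclicPairSum_self_ne_zero _)
    (fun s t hst => coeff_pairExp_cyclicPairSum_of_ne (hval t) (hval s)
      ((Fin.castLE_injective _).ne hst.symm))
    fun p ⟨hhom, hp⟩ hcoeff => eq_zero_of_coeff_pairExp_zero_eq_zero hhom hp
      fun t ht => hcoeff ⟨t, by omega⟩

end

end CyclicQuadratic

open CyclicQuadratic

/-- Let `N+1 = 2k` and let `M_ν` be the cyclic shift on `ℝ^{2k}`. The quadratic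
forms `f_s(q) = ⟨q, M_ν^s q⟩`, `s = 0, ..., k`, form a basis of the space `P_2`
of homogeneous quadratic polynomials invariant under the cyclic shift. -/
theorem quadratic_invariants_basis (k : ℕ) (hk : 1 ≤ k)
    (F : Fin (k + 1) → MvPolynomial (Fin (2 * k)) ℝ)
    (hF : ∀ s : Fin (k + 1),
      F s = ∑ i : Fin (2 * k),
        X i * X ⟨((i : ℕ) + (s : ℕ)) % (2 * k),
          Nat.mod_lt _ (Nat.lt_of_le_of_lt (Nat.zero_le _) i.2)⟩) :
    LinearIndependent ℝ F ∧
    ∀ f : MvPolynomial (Fin (2 * k)) ℝ,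
      (f.IsHomogeneous 2 ∧
        ∀ q : Fin (2 * k) → ℝ,
          MvPolynomial.eval
            (fun i : Fin (2 * k) =>
              q ⟨((i : ℕ) + 1) % (2 * k),
                Nat.mod_lt _ (Nat.lt_of_le_of_lt (Nat.zero_le _) i.2)⟩) f
            = MvPolynomial.eval q f)
      ↔ f ∈ Submodule.span ℝ (Set.range F) := by
  have : NeZero (2 * k) := ⟨by omega⟩
  have hcard : k + 1 = 2 * k / 2 + 1 := by omega
  have hFeq : F = halfCyclicPairSum ℝ (2 * k) ∘ finCongr hcard := by
    funext s
    rw [hF s]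
    refine Finset.sum_congr rfl fun i _ => ?_
    congr 2
  have hshift (i : Fin (2 * k)) :
      (⟨((i : ℕ) + 1) % (2 * k), Nat.mod_lt _ (Nat.lt_of_le_of_lt (Nat.zero_le _) i.2)⟩ :
        Fin (2 * k)) = i + 1 := by
    ext
    simp [Fin.val_add]
  obtain ⟨hli, hspan⟩ := linearIndependent_halfCyclicPairSum_and_span_eq ℝ (2 * k)
  refine ⟨hFeq ▸ hli.comp _ (finCongr hcard).injective, fun f => ?_⟩
  rw [hFeq, EquivLike.range_comp, hspan, Submodule.mem_inf,
    mem_homogeneousSubmodule, mem_cyclicInvariants_iff_eval]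
  simp_rw [hshift]
end

section
/- With ê_m the orthonormal basis of Q^{odd} given by ê_m = (2^{−δ_{k,m}/2}/√k)(sin((2n−1)mπ/(2k)))_{n=1}^{2k} and M_ν the cyclic shift on ℝ^{2k}, one has ⟨ê_j, M_ν^n ê_m⟩ = 0 for j ≠ m (1 ≤ n, j, m ≤ k), and ⟨ê_m, M_ν^n ê_m⟩ = cos(π n m / k). Consequently, for q = Σ_{m=1}^k q̂_m ê_m ∈ Q^{odd}, the vector f(q) = (⟨q, M_ν^s q⟩)_{s=1}^k equals W (q̂_1^2, ..., q̂_k^2)^T where W = (cos(πnm/k))_{n,m=1}^k. -/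
/-!
Up to normalisation, `⟨ê_j, M_ν^n ê_m⟩` is `∑_{i<2k} sin((2i+1)jπ/2k) sin((2(i+n)+1)mπ/2k)`
(the shift wraps around harmlessly because these sines are `2k`-periodic in `i`). The product
formula turns it into two cosine sums in arithmetic progression with steps `π(j∓m)/k`; over a
full period such a sum vanishes unless the step is a multiple of `2π`, which for `1 ≤ j, m ≤ k`
happens only for `j = m` in the first sum and only for `j = m = k` in the second. The surviving
terms are exactly cancelled by the normalising factors `2^{-δ_{k,m}/2}/√k`, and the statement
about `f(q)` follows by expanding the bilinear form in the basis `ê_m`.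
-/

open Finset Real

theorem sum_range_cos_two_pi_mul_div_mul_add (N : ℕ) (p : ℤ) (b : ℝ) :
    ∑ i ∈ range N, cos (2 * π * p / N * i + b) = if (N : ℤ) ∣ p then N * cos b else 0 := by
  rcases Nat.eq_zero_or_pos N with rfl | hN
  · simp
  have hN' : (N : ℝ) ≠ 0 := by positivity
  split_ifs with hdvd
  · obtain ⟨t, rfl⟩ := hdvd
    have hterm : ∀ i : ℕ, cos (2 * π * ((N * t : ℤ) : ℝ) / N * i + b) = cos b := fun i => by
      rw [← cos_add_int_mul_two_pi b (t * i)]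
      congr 1
      push_cast
      field_simp
      ring
    rw [sum_congr rfl fun i _ => hterm i, sum_const, card_range, nsmul_eq_mul]
  · have hsin : sin (2 * π * p / N / 2) ≠ 0 := by
      rw [Ne, sin_eq_zero_iff]
      rintro ⟨n, hn⟩
      refine hdvd ⟨n, ?_⟩
      have hp : (p : ℝ) = N * n := by
        field_simp at hn
        linarith
      exact_mod_cast hp
    apply mul_left_cancel₀ hsin
    rw [sin_mul_sum_cos, mul_zero,
      show N * (2 * π * p / N) / 2 = (p : ℝ) * π by field_simp, sin_int_mul_pi, zero_mul]

theorem eq_of_two_mul_dvd_sub {k j m : ℕ} (hj : j ≤ k) (hm : m ≤ k)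
    (h : 2 * (k : ℤ) ∣ j - m) : j = m := by
  by_contra hjm
  have := Int.eq_zero_of_abs_lt_dvd h (abs_lt.mpr ⟨by omega, by omega⟩)
  omega

theorem eq_of_two_mul_dvd_add {k j m : ℕ} (hj : 1 ≤ j) (hjk : j ≤ k) (hm : 1 ≤ m)
    (hmk : m ≤ k) (h : 2 * (k : ℤ) ∣ j + m) : j = k ∧ m = k := by
  have := Int.eq_zero_of_abs_lt_dvd (dvd_sub h dvd_rfl) (abs_lt.mpr ⟨by omega, by omega⟩)
  omega

theorem sum_range_sin_mul_sin_shift (k n j m : ℕ) (hj : 1 ≤ j) (hjk : j ≤ k) (hm : 1 ≤ m)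
    (hmk : m ≤ k) :
    ∑ i ∈ range (2 * k),
        sin ((2 * i + 1) * j * π / (2 * k)) * sin ((2 * (i + n) + 1) * m * π / (2 * k))
      = if j = m then (if m = k then 2 else 1) * k * cos (π * n * m / k) else 0 := by
  have hk : (k : ℝ) ≠ 0 := by norm_cast; omega
  have hsplit : 2 * ∑ i ∈ range (2 * k),
        sin ((2 * i + 1) * j * π / (2 * k)) * sin ((2 * (i + n) + 1) * m * π / (2 * k))
      = ∑ i ∈ range (2 * k), cos (2 * π * ((j - m : ℤ) : ℝ) / (2 * k : ℕ) * i
          + (j - (2 * n + 1) * m) * π / (2 * k))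
        - ∑ i ∈ range (2 * k), cos (2 * π * ((j + m : ℤ) : ℝ) / (2 * k : ℕ) * i
          + (j + (2 * n + 1) * m) * π / (2 * k)) := by
    rw [mul_sum, ← sum_sub_distrib]
    refine sum_congr rfl fun i _ => ?_
    rw [← mul_assoc, two_mul_sin_mul_sin]
    congr 2 <;> push_cast <;> field_simp <;> ring
  rw [sum_range_cos_two_pi_mul_div_mul_add, sum_range_cos_two_pi_mul_div_mul_add] at hsplit
  push_cast at hsplit
  rcases eq_or_ne j m with rfl | hjm
  · rcases eq_or_ne j k with rfl | hjk'
    · rw [if_pos (by simp), if_pos (dvd_of_eq (by ring))] at hsplit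
      have h1 : ((j : ℝ) - (2 * n + 1) * j) * π / (2 * j) = -(n * π) := by field_simp; ring
      have h2 : ((j : ℝ) + (2 * n + 1) * j) * π / (2 * j) = n * π + π := by field_simp; ring
      rw [h1, h2, cos_neg, cos_add_pi] at hsplit
      simp only [if_true, mul_div_cancel_right₀ _ hk, mul_comm π]
      linear_combination hsplit / 2
    · rw [if_pos (by simp), if_neg fun h => hjk' (eq_of_two_mul_dvd_add hj hjk hj hjk h).1]
        at hsplit
      have h1 : ((j : ℝ) - (2 * n + 1) * j) * π / (2 * k) = -(π * n * j / k) := by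
        field_simp; ring
      rw [h1, cos_neg] at hsplit
      simp only [if_true, if_neg hjk']
      linear_combination hsplit / 2
  · rw [if_neg fun h => hjm (eq_of_two_mul_dvd_sub hjk hmk h),
      if_neg fun h => hjm (by have := eq_of_two_mul_dvd_add hj hjk hm hmk h; omega)] at hsplit
    rw [if_neg hjm]
    linear_combination hsplit / 2

theorem sin_odd_mul_pi_div_mod (k m x : ℕ) :
    sin ((2 * ((x % (2 * k) : ℕ) : ℝ) + 1) * m * π / (2 * k))
      = sin ((2 * (x : ℝ) + 1) * m * π / (2 * k)) := by
  rcases eq_or_ne k 0 with rfl | hk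
  · simp
  have hk' : (k : ℝ) ≠ 0 := by exact_mod_cast hk
  have hx : (x : ℝ) = (x % (2 * k) : ℕ) + 2 * k * (x / (2 * k) : ℕ) := by
    exact_mod_cast (Nat.mod_add_div x (2 * k)).symm
  rw [← sin_add_nat_mul_two_pi _ (x / (2 * k) * m), hx]
  congr 1
  push_cast
  field_simp
  ring

theorem two_rpow_neg_ite_div_sqrt_sq_mul (k m : ℕ) (hk : k ≠ 0) :
    ((2 : ℝ) ^ (-(if m = k then (1 : ℝ) else 0) / 2) / √k) ^ 2 * ((if m = k then 2 else 1) * k)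
      = 1 := by
  have hk' : (0 : ℝ) < k := by positivity
  rw [div_pow, sq_sqrt hk'.le, ← rpow_natCast, ← rpow_mul zero_le_two]
  split_ifs <;> field_simp <;> norm_num

theorem sum_mul_sum_eq_sum_mul_sq_of_orthogonal {ι κ R : Type*} [Fintype ι] [Fintype κ]
    [DecidableEq κ] [CommSemiring R] (c : κ → R) (u v : κ → ι → R) (w : κ → R)
    (h : ∀ m m', ∑ i, u m i * v m' i = if m = m' then w m else 0) :
    ∑ i, (∑ m, c m * u m i) * (∑ m, c m * v m i) = ∑ m, w m * c m ^ 2 := by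
  calc ∑ i, (∑ m, c m * u m i) * (∑ m, c m * v m i)
      = ∑ m, ∑ m', c m * c m' * ∑ i, u m i * v m' i := by
        simp_rw [sum_mul_sum, mul_sum]
        rw [sum_comm]
        refine sum_congr rfl fun m _ => ?_
        rw [sum_comm]
        refine sum_congr rfl fun m' _ => sum_congr rfl fun i _ => ?_
        ring
    _ = ∑ m, w m * c m ^ 2 := by
        simp only [h, mul_ite, mul_zero, sum_ite_eq, mem_univ, if_true]
        refine sum_congr rfl fun m _ => ?_
        ring

theorem ehat_shift_inner_products_general (k : ℕ)
    (ehat : ℕ → Fin (2 * k) → ℝ)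
    (hehat : ∀ (m : ℕ) (j : Fin (2 * k)),
      ehat m j = ((2 : ℝ) ^ (-(if m = k then (1 : ℝ) else 0) / 2) / Real.sqrt k)
        * Real.sin ((2 * (j : ℕ) + 1) * m * Real.pi / (2 * k)))
    (shift : ℕ → Fin (2 * k) → Fin (2 * k))
    (hshift : ∀ (s : ℕ) (j : Fin (2 * k)),
      shift s j = ⟨((j : ℕ) + s) % (2 * k),
        Nat.mod_lt _ (Nat.lt_of_le_of_lt (Nat.zero_le _) j.2)⟩) :
    (∀ n j m : ℕ, 1 ≤ n → n ≤ k → 1 ≤ j → j ≤ k → 1 ≤ m → m ≤ k → j ≠ m →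
      ∑ i : Fin (2 * k), ehat j i * ehat m (shift n i) = 0) ∧
    (∀ n m : ℕ, 1 ≤ n → n ≤ k → 1 ≤ m → m ≤ k →
      ∑ i : Fin (2 * k), ehat m i * ehat m (shift n i)
        = Real.cos (Real.pi * n * m / k)) ∧
    (∀ qhat : Fin k → ℝ, ∀ s : ℕ, 1 ≤ s → s ≤ k →
      ∑ i : Fin (2 * k),
          (∑ m : Fin k, qhat m * ehat ((m : ℕ) + 1) i)
            * (∑ m : Fin k, qhat m * ehat ((m : ℕ) + 1) (shift s i))
        = ∑ m : Fin k, Real.cos (Real.pi * s * ((m : ℕ) + 1) / k) * qhat m ^ 2) := by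
  have ehat_inner_shift : ∀ n j m : ℕ, 1 ≤ j → j ≤ k → 1 ≤ m → m ≤ k →
      ∑ i : Fin (2 * k), ehat j i * ehat m (shift n i)
        = if j = m then cos (π * n * m / k) else 0 := by
    intro n j m hj hjk hm hmk
    have hnorm := two_rpow_neg_ite_div_sqrt_sq_mul k j (by omega)
    set c : ℕ → ℝ := fun m => (2 : ℝ) ^ (-(if m = k then (1 : ℝ) else 0) / 2) / √k
    have hterm : ∀ i : Fin (2 * k), ehat j i * ehat m (shift n i) = c j * c m *
        (sin ((2 * (i : ℕ) + 1) * j * π / (2 * k))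
          * sin ((2 * ((i : ℕ) + n) + 1) * m * π / (2 * k))) := fun i => by
      rw [hehat, hshift, hehat, sin_odd_mul_pi_div_mod]
      push_cast
      ring
    rw [sum_congr rfl fun i _ => hterm i, ← mul_sum,
      Fin.sum_univ_eq_sum_range (fun i => sin ((2 * (i : ℝ) + 1) * j * π / (2 * k))
        * sin ((2 * ((i : ℝ) + n) + 1) * m * π / (2 * k))),
      sum_range_sin_mul_sin_shift k n j m hj hjk hm hmk]
    by_cases hjm : j = m
    · subst hjm
      rw [if_pos rfl, if_pos rfl]
      linear_combination cos (π * n * j / k) * hnorm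
    · rw [if_neg hjm, if_neg hjm, mul_zero]
  refine ⟨fun n j m _ _ hj hjk hm hmk hjm => by
      rw [ehat_inner_shift n j m hj hjk hm hmk, if_neg hjm],
    fun n m _ _ hm hmk => by rw [ehat_inner_shift n m m hm hmk hm hmk, if_pos rfl],
    fun qhat s _ _ => sum_mul_sum_eq_sum_mul_sq_of_orthogonal _ _ _ _ fun m m' => ?_⟩
  rw [ehat_inner_shift s _ _ (by omega) (by omega) (by omega) (by omega)]
  simp only [add_left_inj, Fin.val_inj, Nat.cast_add, Nat.cast_one]
  split_ifs with h <;> simp only [h]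

/-- With `ê_m = (2^{-δ_{k,m}/2}/√k)(sin((2n-1)mπ/(2k)))_{n=1}^{2k}` the
orthonormal basis of `Q^{odd}` and `M_ν` the cyclic shift on `ℝ^{2k}`:
`⟨ê_j, M_ν^n ê_m⟩ = 0` for `j ≠ m`, `⟨ê_m, M_ν^n ê_m⟩ = cos(πnm/k)`, and hence
for `q = Σ q̂_m ê_m`, `f(q) = (⟨q, M_ν^s q⟩)_{s=1}^k = W (q̂_1^2,...,q̂_k^2)ᵀ`
with `W = (cos(πnm/k))`. -/
theorem ehat_shift_inner_products (k : ℕ) (hk : 1 ≤ k)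
    (ehat : ℕ → Fin (2 * k) → ℝ)
    (hehat : ∀ (m : ℕ) (j : Fin (2 * k)),
      ehat m j = ((2 : ℝ) ^ (-(if m = k then (1 : ℝ) else 0) / 2) / Real.sqrt k)
        * Real.sin ((2 * (j : ℕ) + 1) * m * Real.pi / (2 * k)))
    (shift : ℕ → Fin (2 * k) → Fin (2 * k))
    (hshift : ∀ (s : ℕ) (j : Fin (2 * k)),
      shift s j = ⟨((j : ℕ) + s) % (2 * k),
        Nat.mod_lt _ (Nat.lt_of_le_of_lt (Nat.zero_le _) j.2)⟩) :
    (∀ n j m : ℕ, 1 ≤ n → n ≤ k → 1 ≤ j → j ≤ k → 1 ≤ m → m ≤ k → j ≠ m →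
      ∑ i : Fin (2 * k), ehat j i * ehat m (shift n i) = 0) ∧
    (∀ n m : ℕ, 1 ≤ n → n ≤ k → 1 ≤ m → m ≤ k →
      ∑ i : Fin (2 * k), ehat m i * ehat m (shift n i)
        = Real.cos (Real.pi * n * m / k)) ∧
    (∀ qhat : Fin k → ℝ, ∀ s : ℕ, 1 ≤ s → s ≤ k →
      ∑ i : Fin (2 * k),
          (∑ m : Fin k, qhat m * ehat ((m : ℕ) + 1) i)
            * (∑ m : Fin k, qhat m * ehat ((m : ℕ) + 1) (shift s i))
        = ∑ m : Fin k, Real.cos (Real.pi * s * ((m : ℕ) + 1) / k) * qhat m ^ 2) :=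
  ehat_shift_inner_products_general k ehat hehat shift hshift
end
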